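/- Let (g, h) be a Czech hat game on the directed cycle on ZMod k (k ≥ 2). If for some vertex i one has (h i − g i) · h (i+1) > h i · g (i+1) (equivalently 1 − g(i)/h(i) > g(i+1)/h(i+1)), then the game is unwinnable. -/
import Mathlib

section Aux

variable {k : ℕ} [NeZero k] (h : ZMod k → ℕ)
  (φ : ∀ v : ZMod k, Fin (h (v + 1)) → Fin (h v)) (i : ZMod k)

/-- Backward chain of colors: `cycE a n` is the color of sage `i - n`. -/
def cycE (a : Fin (h i)) : ∀ n : ℕ, Fin (h (i - (n : ZMod k)))
  | 0 => Fin.cast (congrArg h (by simp)) a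
  | n + 1 => φ (i - ((n + 1 : ℕ) : ZMod k))
      (Fin.cast (congrArg h (by push_cast; ring)) (cycE a n))

/-- The adversarial coloring with `c i = a`, `c (i+1) = b`, chained elsewhere. -/
def cycC (a : Fin (h i)) (b : Fin (h (i + 1))) (u : ZMod k) : Fin (h u) :=
  if hu : u = i + 1 then Fin.cast (congrArg h hu.symm) b
  else Fin.cast (congrArg h
      (by rw [ZMod.natCast_val, ZMod.cast_id, sub_sub_cancel]))
    (cycE h φ i a (i - u).val)

variable {h i}

lemma cycC_of_ne {a : Fin (h i)} {b : Fin (h (i + 1))} {u : ZMod k} (hu : u ≠ i + 1) :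
    cycC h φ i a b u = Fin.cast (congrArg h
      (by rw [ZMod.natCast_val, ZMod.cast_id, sub_sub_cancel]))
    (cycE h φ i a (i - u).val) := dif_neg hu

lemma cycC_apply_succ (a : Fin (h i)) (b : Fin (h (i + 1))) :
    cycC h φ i a b (i + 1) = b := by
  simp only [cycC, dif_pos rfl]
  exact Fin.ext (by simp)

lemma cycC_apply_self (hne : i ≠ i + 1) (a : Fin (h i)) (b : Fin (h (i + 1))) :
    cycC h φ i a b i = a := by
  rw [cycC_of_ne φ hne]
  apply Fin.ext
  have h0 : (i - i).val = 0 := by simp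
  rw [Fin.coe_cast, h0]
  simp [cycE]

lemma cycC_indep (a : Fin (h i)) (b b' : Fin (h (i + 1))) {u : ZMod k} (hu : u ≠ i + 1) :
    cycC h φ i a b u = cycC h φ i a b' u := by
  rw [cycC_of_ne φ hu, cycC_of_ne φ hu]

lemma cycC_chain (a : Fin (h i)) (b : Fin (h (i + 1))) {v : ZMod k}
    (hvi : v ≠ i) (hv1 : v ≠ i + 1) :
    cycC h φ i a b v = φ v (cycC h φ i a b (v + 1)) := by
  -- write v = i - (m+1)
  have hivne : i - v ≠ 0 := sub_ne_zero.mpr (Ne.symm hvi)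
  have htpos : 0 < (i - v).val := Nat.pos_of_ne_zero (by simpa [ZMod.val_eq_zero] using hivne)
  have htlt : (i - v).val < k := ZMod.val_lt _
  obtain ⟨m, hm⟩ : ∃ m, (i - v).val = m + 1 := ⟨(i - v).val - 1, by omega⟩
  have hveq : v = i - ((m + 1 : ℕ) : ZMod k) := by
    have : (((i - v).val : ℕ) : ZMod k) = i - v := by rw [ZMod.natCast_val, ZMod.cast_id]
    rw [hm] at this
    rw [this, sub_sub_cancel]
  have hmk : m + 1 < k := by omega
  subst hveq
  have hne1 : i - ((m + 1 : ℕ) : ZMod k) + 1 ≠ i + 1 := by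
    intro H
    exact hvi (by simpa using (add_right_cancel H))
  -- compute the value at v + 1
  have hsub1 : i - (i - ((m + 1 : ℕ) : ZMod k) + 1) = ((m : ℕ) : ZMod k) := by
    push_cast; ring
  have hinner : cycC h φ i a b (i - ((m + 1 : ℕ) : ZMod k) + 1)
      = Fin.cast (congrArg h (by push_cast; ring)) (cycE h φ i a m) := by
    rw [cycC_of_ne φ hne1]
    apply Fin.ext
    simp only [Fin.coe_cast]
    have : (i - (i - ((m + 1 : ℕ) : ZMod k) + 1)).val = m := by
      rw [hsub1, ZMod.val_natCast_of_lt (by omega)]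
    rw [this]
  rw [cycC_of_ne φ hv1, hinner]
  apply Fin.ext
  simp only [Fin.coe_cast]
  have harg : (i - (i - ((m + 1 : ℕ) : ZMod k))).val = m + 1 := by
    rw [sub_sub_cancel, ZMod.val_natCast_of_lt hmk]
  rw [harg]
  simp [cycE]

end Aux

/-- A Czech hat game on the digraph with adjacency `D` (sage `v` sees sage `u`
iff `D v u`), guessness `g`, and hatness `h`, is winnable: there is a strategy
assigning to each sage `v` a set of `g v` guesses, depending only on the hats
she sees, such that for every coloring some sage guesses her own hat color. -/
def HatGame.Winnable {V : Type*} (D : V → V → Prop) (g h : V → ℕ) : Prop :=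
  ∃ F : ∀ v : V, (∀ u : V, Fin (h u)) → Finset (Fin (h v)),
    (∀ (v : V) (c c' : ∀ u : V, Fin (h u)),
        (∀ u : V, D v u → c u = c' u) → F v c = F v c') ∧
    (∀ (v : V) (c : ∀ u : V, Fin (h u)), (F v c).card = g v) ∧
    (∀ c : ∀ u : V, Fin (h u), ∃ v : V, c v ∈ F v c)

/-- If some sage `i` on a directed cycle sees sage `i+1` and
`1 - g(i)/h(i) > g(i+1)/h(i+1)`, the Czech game is unwinnable. -/
theorem czech_directed_cycle_unwinnable (k : ℕ) (hk : 2 ≤ k)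
    (g h : ZMod k → ℕ) (hgh : ∀ v, 0 < g v ∧ g v < h v) (i : ZMod k)
    (hi : (h i - g i) * h (i + 1) > h i * g (i + 1)) :
    ¬ HatGame.Winnable (fun a b : ZMod k => b = a + 1) g h := by
  classical
  haveI : NeZero k := ⟨by omega⟩
  haveI : Fact (1 < k) := ⟨hk⟩
  have hone : (1 : ZMod k) ≠ 0 := one_ne_zero
  have hii1 : i ≠ i + 1 := fun H => hone (by simpa using (left_eq_add.mp H))
  have hpos : ∀ v, 0 < h v := fun v => lt_trans (hgh v).1 (hgh v).2
  rintro ⟨F, hsee, hcard, hwin⟩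
  set d : ∀ u : ZMod k, Fin (h u) := fun u => ⟨0, hpos u⟩ with hd
  set f : ∀ v : ZMod k, Fin (h (v + 1)) → Finset (Fin (h v)) :=
    fun v y => F v (Function.update d (v + 1) y) with hfdef
  have hF : ∀ (v : ZMod k) (c : ∀ u : ZMod k, Fin (h u)), F v c = f v (c (v + 1)) := by
    intro v c
    exact hsee v c _ (by rintro u rfl; simp)
  have hfcard : ∀ (v : ZMod k) (y : Fin (h (v + 1))), (f v y).card = g v :=
    fun v y => hcard v _
  have hex : ∀ (v : ZMod k) (y : Fin (h (v + 1))), ∃ x : Fin (h v), x ∉ f v y := by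
    intro v y
    have : ((f v y)ᶜ : Finset (Fin (h v))).Nonempty := by
      rw [← Finset.card_pos, Finset.card_compl, hfcard, Fintype.card_fin]
      have := (hgh v).2; omega
    obtain ⟨x, hx⟩ := this
    exact ⟨x, Finset.mem_compl.mp hx⟩
  choose φ hφ using hex
  set b₀ : Fin (h (i + 1)) := ⟨0, hpos _⟩ with hb₀
  set Φ : Fin (h i) → Fin (h (i + 1 + 1)) := fun a => cycC h φ i a b₀ (i + 1 + 1) with hΦ
  have h11 : (i + 1 + 1 : ZMod k) ≠ i + 1 := by
    intro H
    exact hone (by simpa using (add_right_cancel H))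
  -- key dichotomy
  have key : ∀ (a : Fin (h i)) (b : Fin (h (i + 1))),
      a ∈ f i b ∨ b ∈ f (i + 1) (Φ a) := by
    intro a b
    obtain ⟨v, hv⟩ := hwin (cycC h φ i a b)
    rw [hF] at hv
    by_cases hvi : v = i
    · subst hvi
      rw [cycC_apply_self φ hii1, cycC_apply_succ] at hv
      exact Or.inl hv
    · by_cases hv1 : v = i + 1
      · subst hv1
        rw [cycC_apply_succ, cycC_indep φ a b b₀ h11] at hv
        exact Or.inr hv
      · exfalso
        rw [cycC_chain φ a b hvi hv1] at hv
        exact hφ v _ hv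
  -- double counting
  set P1 : Finset (Fin (h i) × Fin (h (i + 1))) :=
    Finset.univ.filter (fun p => p.1 ∉ f i p.2) with hP1def
  set P2 : Finset (Fin (h i) × Fin (h (i + 1))) :=
    Finset.univ.filter (fun p => p.2 ∈ f (i + 1) (Φ p.1)) with hP2def
  have hsub : P1 ⊆ P2 := by
    intro p hp
    simp only [hP1def, Finset.mem_filter, Finset.mem_univ, true_and] at hp
    simp only [hP2def, Finset.mem_filter, Finset.mem_univ, true_and]
    rcases key p.1 p.2 with hc | hc
    · exact absurd hc hp
    · exact hc
  have hP1card : P1.card = h (i + 1) * (h i - g i) := by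
    rw [hP1def, Finset.card_filter, ← Finset.univ_product_univ, Finset.sum_product,
      Finset.sum_comm]
    have : ∀ b : Fin (h (i + 1)),
        (∑ a : Fin (h i), if a ∉ f i b then 1 else 0) = h i - g i := by
      intro b
      rw [← Finset.card_filter, Finset.filter_not, Finset.filter_mem_eq_inter,
        Finset.univ_inter, Finset.card_sdiff_of_subset (Finset.subset_univ _),
        Finset.card_univ, Fintype.card_fin, hfcard]
    rw [Finset.sum_congr rfl (fun b _ => this b), Finset.sum_const, Finset.card_univ,
      Fintype.card_fin, smul_eq_mul]
  have hP2card : P2.card = h i * g (i + 1) := by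
    rw [hP2def, Finset.card_filter, ← Finset.univ_product_univ, Finset.sum_product]
    have : ∀ a : Fin (h i),
        (∑ b : Fin (h (i + 1)), if b ∈ f (i + 1) (Φ a) then 1 else 0) = g (i + 1) := by
      intro a
      rw [← Finset.card_filter, Finset.filter_mem_eq_inter, Finset.univ_inter, hfcard]
    rw [Finset.sum_congr rfl (fun a _ => this a), Finset.sum_const, Finset.card_univ,
      Fintype.card_fin, smul_eq_mul]
  have := Finset.card_le_card hsub
  rw [hP1card, hP2card, mul_comm] at this
  omega
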